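/- Let x ∈ k_∞ be nonzero with v(x) > 0 (equivalently deg x < 0; note that v(x) = −(q−1)·deg x for nonzero x ∈ k_∞). Then v(ẽ(x)) = q^{v(x)/(q−1)} = q^{−deg x}. -/

import Mathlib

/-!
Statement 10.  Setup: `L = F_q((u))` with additive valuation `v = HahnSeries.order`
(`v(u) = 1`), `θ̃ = u⁻¹`, `θ = −θ̃^{q−1}`, `k_∞ = F_q((1/θ)) ⊆ L` (the series with
`u`-support in `(q−1)ℤ`), and `ẽ : k_∞ → L` as in the context (see the doc-strings
below).  The theorem: for nonzero `x ∈ k_∞` with `v(x) > 0`, one has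
`v(ẽ(x)) = q^{v(x)/(q−1)}`; since `v(x) = (q−1)·m` for a (unique) natural number
`m ≥ 1`, this is stated as: `x.order = (q−1)·m → (ẽ x).order = q^m`.
-/

noncomputable section

variable (Fq : Type) [Field Fq] [Fintype Fq]

local notation "q" => Fintype.card Fq
local notation "𝕃" => LaurentSeries Fq

/-- `u`, the variable of `L = F_q((u))`. -/
def uu : LaurentSeries Fq := HahnSeries.single 1 1

/-- `θ̃ := u⁻¹`. -/
def tth : LaurentSeries Fq := (uu Fq)⁻¹

/-- `θ := −θ̃^{q−1}`. -/
def th : LaurentSeries Fq := -(tth Fq) ^ (q - 1)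

/-- `D_0 = 1`, `D_i = (θ^{q^i} − θ)(θ^{q^i} − θ^q)⋯(θ^{q^i} − θ^{q^{i−1}})`. -/
def Dc (i : ℕ) : LaurentSeries Fq :=
  ∏ m ∈ Finset.range i, (th Fq ^ (q ^ i) - th Fq ^ (q ^ m))

/-- `L_0 = 1`, `L_i = (θ − θ^q)⋯(θ − θ^{q^i})`. -/
def Lc (i : ℕ) : LaurentSeries Fq :=
  ∏ m ∈ Finset.range i, (th Fq - th Fq ^ (q ^ (m + 1)))

/-- The Carlitz exponential `exp_C(z) = Σ_{i≥0} z^{q^i}/D_i`. -/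
def expC (z : LaurentSeries Fq) : LaurentSeries Fq :=
  ∑' i : ℕ, z ^ (q ^ i) / Dc Fq i

/-- The Carlitz period `π̃ = −θ̃^q·∏_{j≥1}(1 − θ^{1−q^j})⁻¹`. -/
def pitilde : LaurentSeries Fq :=
  -(tth Fq) ^ q * ∏' j : ℕ, (1 - th Fq ^ ((1 : ℤ) - (q : ℤ) ^ (j + 1)))⁻¹

/-- `e(x) := exp_C(π̃·x)`. -/
def eC (x : LaurentSeries Fq) : LaurentSeries Fq := expC Fq (pitilde Fq * x)

/-- The `i`-th elementary symmetric function (a convergent sum in `L`) of the family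
`(θ^{-q^j})_{j≥1}`. -/
def esymm (i : ℕ) : LaurentSeries Fq :=
  ∑' s : {s : Finset ℕ // s.card = i ∧ ∀ j ∈ s, 1 ≤ j},
    ∏ j ∈ s.1, (th Fq)⁻¹ ^ (q ^ j)

/-- `ẽ(θ^{-i-1}) = θ̃^{-q}·(−1)^i·s_i`, the `t^i`-coefficient of
`Ω(t) = θ̃^{-q}·∏_{j≥1}(1 − t·θ^{-q^j})`. -/
def ecoeff (i : ℕ) : LaurentSeries Fq :=
  (tth Fq)⁻¹ ^ q * (-1) ^ i * esymm Fq i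

/-- For `x ∈ k_∞ = F_q((1/θ)) ⊆ L`, the coefficient `c_m` of `θ^{-m}` in the expansion
`x = Σ c_m θ^{-m}`; since `θ^{-m} = (−1)^m u^{(q−1)m}` this is `(−1)^m·x.coeff((q−1)m)`. -/
def thetaCoeff (x : LaurentSeries Fq) (m : ℕ) : Fq :=
  (-1) ^ m * x.coeff (((q : ℤ) - 1) * m)

/-- `ẽ : k_∞ → L`, the unique continuous `F_q`-linear map vanishing on `A` with
`ẽ(θ^{-i-1}) = ecoeff i`: on `x = a + Σ_{n≥0} c_{n+1}·θ^{-n-1}` (with `a ∈ A`) it is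
given by `Σ_{n≥0} c_{n+1}·ẽ(θ^{-n-1})`. -/
def etilde (x : LaurentSeries Fq) : LaurentSeries Fq :=
  ∑' n : ℕ, thetaCoeff Fq x (n + 1) • ecoeff Fq n

/-- `Res x`, the coefficient of `θ^{-1}` in the `1/θ`-expansion of `x ∈ k_∞`. -/
def ResL (x : LaurentSeries Fq) : Fq := thetaCoeff Fq x 1

/-- Membership in `k_∞ = F_q((1/θ)) ⊆ L`: the `u`-support is contained in `(q−1)·ℤ`. -/
def memKinf (x : LaurentSeries Fq) : Prop :=
  ∀ m : ℤ, x.coeff m ≠ 0 → ((q : ℤ) - 1) ∣ m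

/-- `Ψ_N` evaluated at `x ∈ k_∞`. -/
def PsiVal (N : ℕ) (x : LaurentSeries Fq) : LaurentSeries Fq :=
  ∑ j ∈ Finset.range (N + 1), x ^ (q ^ j) / (Dc Fq j * (Lc Fq (N - j)) ^ (q ^ j))



open Filter HahnSeries

instance (priority := 100) valued_nonarchAddGroup {R Γ₀ : Type*} [Ring R]
    [LinearOrderedCommGroupWithZero Γ₀] [hv : Valued R Γ₀] : NonarchimedeanAddGroup R where
  is_nonarchimedean := fun U hU => by
    obtain ⟨γ, hγ⟩ := (Valued.is_topological_valuation U).mp hU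
    exact ⟨⟨hv.v.restrict.ltAddSubgroup γ,
      AddSubgroup.isOpen_of_mem_nhds _ ((Valued.is_topological_valuation _).mpr
        ⟨γ, fun _ h => h⟩)⟩, hγ⟩

lemma one_lt_q : 1 < q := Fintype.one_lt_card

/-- Coefficient extraction as an additive monoid hom. -/
def coeffHom (d : ℤ) : 𝕃 →+ Fq where
  toFun f := f.coeff d
  map_zero' := rfl
  map_add' _ _ := HahnSeries.coeff_add

lemma coeff_tsum_eq_single {ι : Type} (f : ι → 𝕃) (hf : Summable f) (d : ℤ) (i0 : ι)
    (h : ∀ i, i ≠ i0 → (f i).coeff d = 0) :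
    (∑' i, f i).coeff d = (f i0).coeff d := by
  letI : UniformSpace Fq := ⊥
  haveI : DiscreteTopology Fq := ⟨UniformSpace.toTopologicalSpace_bot⟩
  have h1 : HasSum (fun i => (f i).coeff d) ((∑' i, f i).coeff d) :=
    hf.hasSum.map (coeffHom Fq d) (LaurentSeries.uniformContinuous_coeff d).continuous
  exact h1.unique (hasSum_single i0 h)

lemma coeff_tsum_eq_zero {ι : Type} (f : ι → 𝕃) (hf : Summable f) (d : ℤ)
    (h : ∀ i, (f i).coeff d = 0) : (∑' i, f i).coeff d = 0 := by
  letI : UniformSpace Fq := ⊥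
  haveI : DiscreteTopology Fq := ⟨UniformSpace.toTopologicalSpace_bot⟩
  have h1 : HasSum (fun i => (f i).coeff d) ((∑' i, f i).coeff d) :=
    hf.hasSum.map (coeffHom Fq d) (LaurentSeries.uniformContinuous_coeff d).continuous
  exact h1.unique (by simp only [h]; exact hasSum_zero)

lemma tendsto_cofinite_zero_of_coeff {ι : Type} (g : ι → 𝕃) (D : ι → ℤ)
    (h : ∀ i, ∀ d : ℤ, d < D i → (g i).coeff d = 0)
    (hD : Tendsto D cofinite atTop) : Tendsto g cofinite (nhds 0) := by
  refine ((Valued.hasBasis_nhds_zero 𝕃 (WithZero (Multiplicative ℤ))).tendsto_right_iff (f := g) (la := cofinite)).mpr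
    fun γ0 _ => ?_
  obtain ⟨γ, hγe⟩ : ∃ γ : WithZero (Multiplicative ℤ),
      MonoidWithZeroHom.ValueGroup₀.embedding γ0.1 = γ := ⟨_, rfl⟩
  have hne : (γ : WithZero (Multiplicative ℤ)) ≠ 0 := fun h => γ0.ne_zero
    (MonoidWithZeroHom.ValueGroup₀.embedding_injective ((hγe.trans h).trans (map_zero _).symm))
  set c : ℤ := Multiplicative.toAdd (WithZero.unzero hne) with hc
  have hγ : (γ : WithZero (Multiplicative ℤ)) = ((Multiplicative.ofAdd c : Multiplicative ℤ) : WithZero (Multiplicative ℤ)) := by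
    rw [hc, ofAdd_toAdd, WithZero.coe_unzero]
  filter_upwards [hD.eventually (eventually_gt_atTop (-c))] with i hi
  have h1 : Valued.v (g i) ≤ ((Multiplicative.ofAdd (-(D i)) : Multiplicative ℤ) : WithZero (Multiplicative ℤ)) :=
    (LaurentSeries.valuation_le_iff_coeff_lt_eq_zero (K := Fq)).mpr (h i)
  refine (Valuation.restrict_lt_iff_lt_embedding _).mpr (lt_of_le_of_lt h1 ?_)
  rw [hγe, hγ]
  exact WithZero.coe_lt_coe.mpr (Multiplicative.ofAdd_lt.mpr (by omega))

lemma summable_of_coeff {ι : Type} (g : ι → 𝕃) (D : ι → ℤ)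
    (h : ∀ i, ∀ d : ℤ, d < D i → (g i).coeff d = 0)
    (hD : Tendsto D cofinite atTop) : Summable g :=
  NonarchimedeanAddGroup.summable_of_tendsto_cofinite_zero
    (tendsto_cofinite_zero_of_coeff Fq g D h hD)

/-- The key combinatorial lemma: among `i`-element sets of positive integers, `{1, …, i}`
is the unique minimizer of `s ↦ ∑_{j ∈ s} b^j`. -/
lemma key_lemma {b : ℕ} (hb : 2 ≤ b) :
    ∀ (i : ℕ) (s : Finset ℕ), s.card = i → (∀ j ∈ s, 1 ≤ j) →
      (∑ k ∈ Finset.Icc 1 i, b ^ k) ≤ (∑ j ∈ s, b ^ j) ∧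
      ((∑ j ∈ s, b ^ j) = (∑ k ∈ Finset.Icc 1 i, b ^ k) → s = Finset.Icc 1 i) := by
  intro i
  induction i with
  | zero =>
    intro s hcard _
    rw [Finset.card_eq_zero] at hcard
    subst hcard
    simp
  | succ i ih =>
    intro s hcard h1
    have hne : s.Nonempty := Finset.card_pos.mp (by omega)
    set M := s.max' hne with hM
    have hMmem : M ∈ s := s.max'_mem hne
    have hsub : s ⊆ Finset.Icc 1 M := fun j hj =>
      Finset.mem_Icc.mpr ⟨h1 j hj, s.le_max' j hj⟩
    have hcard2 : i + 1 ≤ M := by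
      have := Finset.card_le_card hsub
      rw [hcard, Nat.card_Icc] at this
      omega
    set s' := s.erase M with hs'
    have hcard' : s'.card = i := by rw [hs', Finset.card_erase_of_mem hMmem, hcard]; omega
    have h1' : ∀ j ∈ s', 1 ≤ j := fun j hj => h1 j (Finset.erase_subset _ _ hj)
    obtain ⟨ihle, iheq⟩ := ih s' hcard' h1'
    have hsum : (∑ j ∈ s, b ^ j) = b ^ M + ∑ j ∈ s', b ^ j := by
      rw [hs', ← Finset.add_sum_erase _ _ hMmem]
    have hT : (∑ k ∈ Finset.Icc 1 (i+1), b ^ k)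
        = (∑ k ∈ Finset.Icc 1 i, b ^ k) + b ^ (i+1) :=
      Finset.sum_Icc_succ_top (by omega) _
    have hpow : b ^ (i+1) ≤ b ^ M := Nat.pow_le_pow_right (by omega) hcard2
    constructor
    · rw [hsum, hT]; linarith
    · intro heq
      rw [hsum, hT] at heq
      have hpowEq : b ^ M = b ^ (i+1) := by linarith
      have hMeq : M = i + 1 := Nat.pow_right_injective hb hpowEq
      have hseq : s' = Finset.Icc 1 i := iheq (by linarith)
      have hins : s = insert M s' := (Finset.insert_erase hMmem).symm
      rw [hins, hMeq, hseq]
      ext j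
      simp only [Finset.mem_insert, Finset.mem_Icc]
      omega

lemma neg_single (a : ℤ) (r : Fq) :
    -(HahnSeries.single a r : 𝕃) = HahnSeries.single a (-r) := by
  ext d
  rw [HahnSeries.coeff_neg, HahnSeries.coeff_single, HahnSeries.coeff_single]
  split <;> simp

lemma tth_eq : tth Fq = HahnSeries.single (-1 : ℤ) 1 := by
  rw [tth, uu, HahnSeries.inv_single (1 : ℤ) (1 : Fq), inv_one]

lemma th_eq : th Fq = HahnSeries.single (-((q : ℤ) - 1)) (-1) := by
  have h1 : 1 ≤ q := (one_lt_q Fq).le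
  rw [th, tth_eq, HahnSeries.single_pow, one_pow, neg_single]
  congr 1
  rw [nsmul_eq_mul, mul_neg_one, Nat.cast_sub h1, Nat.cast_one]

lemma th_inv_eq : (th Fq)⁻¹ = HahnSeries.single ((q : ℤ) - 1) (-1) := by
  rw [th_eq, HahnSeries.inv_single (-((q:ℤ)-1)) (-1 : Fq),
    neg_neg, inv_neg, inv_one]

lemma th_inv_pow (j : ℕ) :
    (th Fq)⁻¹ ^ q ^ j = HahnSeries.single (((q - 1) * q ^ j : ℕ) : ℤ) (-1) := by
  have h1 : 1 ≤ q := (one_lt_q Fq).le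
  rw [th_inv_eq, HahnSeries.single_pow, FiniteField.pow_card_pow]
  congr 1
  rw [nsmul_eq_mul, Nat.cast_mul, Nat.cast_sub h1, Nat.cast_pow, Nat.cast_one]
  ring

lemma prod_single (s : Finset ℕ) :
    (∏ j ∈ s, (th Fq)⁻¹ ^ q ^ j) =
      HahnSeries.single ((((q - 1) * ∑ j ∈ s, q ^ j : ℕ)) : ℤ) ((-1) ^ s.card) := by
  induction s using Finset.cons_induction with
  | empty =>
    rw [Finset.prod_empty, Finset.sum_empty, Finset.card_empty, Nat.mul_zero, pow_zero,
      Nat.cast_zero, HahnSeries.single_zero_one]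
  | cons a s ha ih =>
    rw [Finset.prod_cons, ih, th_inv_pow, HahnSeries.single_mul_single, Finset.card_cons,
      Finset.sum_cons]
    have hexp : (q - 1) * q ^ a + (q - 1) * ∑ j ∈ s, q ^ j
        = (q - 1) * (q ^ a + ∑ j ∈ s, q ^ j) := (Nat.mul_add _ _ _).symm
    rw [← hexp, Nat.cast_add, pow_succ, mul_comm ((-1 : Fq) ^ s.card) (-1 : Fq)]

lemma esymm_summable (i : ℕ) :
    Summable (fun s : {s : Finset ℕ // s.card = i ∧ ∀ j ∈ s, 1 ≤ j} =>
      ∏ j ∈ s.1, (th Fq)⁻¹ ^ q ^ j) := by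
  have hq2 : 2 ≤ q := one_lt_q Fq
  apply summable_of_coeff Fq _ (fun s => (((q - 1) * ∑ j ∈ s.1, q ^ j : ℕ) : ℤ))
  · intro s d hd
    rw [prod_single, HahnSeries.coeff_single, if_neg (by omega)]
  · rw [Filter.tendsto_atTop]
    intro N
    rw [Filter.eventually_cofinite]
    apply Set.Finite.subset
      (((Finset.range N.toNat).powerset.finite_toSet.preimage
        (Set.injOn_of_injective Subtype.val_injective)))
    intro s hs
    simp only [not_le, Set.mem_setOf_eq] at hs
    simp only [Set.mem_preimage, Finset.coe_powerset, Set.mem_preimage, Set.mem_setOf_eq,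
      Finset.coe_range, Set.subset_def, Finset.mem_coe, Set.mem_Iio]
    intro j hj
    set W : ℕ := ∑ j' ∈ s.1, q ^ j' with hW
    set W2 : ℕ := (q - 1) * W with hW2
    have h1 : q ^ j ≤ W := Finset.single_le_sum (fun _ _ => Nat.zero_le _) hj
    have h2 : j < q ^ j := Nat.lt_pow_self (one_lt_q Fq)
    have h3 : W ≤ W2 := by rw [hW2]; exact Nat.le_mul_of_pos_left _ (by omega)
    have h5 : j < N.toNat := by omega
    simpa [Finset.mem_range] using h5

lemma esymm_coeff_lt (i : ℕ) (d : ℤ)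
    (hd : d < (((q - 1) * ∑ k ∈ Finset.Icc 1 i, q ^ k : ℕ) : ℤ)) :
    (esymm Fq i).coeff d = 0 := by
  rw [esymm]
  apply coeff_tsum_eq_zero Fq _ (esymm_summable Fq i)
  intro s
  rw [prod_single, HahnSeries.coeff_single, if_neg]
  have hle := (key_lemma (one_lt_q Fq) i s.1 s.2.1 s.2.2).1
  have h2 : ((q - 1) * ∑ k ∈ Finset.Icc 1 i, q ^ k) ≤ (q - 1) * ∑ j ∈ s.1, q ^ j :=
    Nat.mul_le_mul_left _ hle
  set A := (q - 1) * ∑ k ∈ Finset.Icc 1 i, q ^ k with hA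
  set B := (q - 1) * ∑ j ∈ s.1, q ^ j with hB
  omega

lemma esymm_coeff_eq (i : ℕ) :
    (esymm Fq i).coeff (((q - 1) * ∑ k ∈ Finset.Icc 1 i, q ^ k : ℕ) : ℤ) = (-1) ^ i := by
  have hIcc1 : (Finset.Icc 1 i).card = i := by rw [Nat.card_Icc]; omega
  have hIcc2 : ∀ j ∈ Finset.Icc 1 i, 1 ≤ j := fun j hj => (Finset.mem_Icc.mp hj).1
  rw [esymm, coeff_tsum_eq_single Fq _ (esymm_summable Fq i) _ ⟨Finset.Icc 1 i, hIcc1, hIcc2⟩ ?_]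
  · rw [prod_single, HahnSeries.coeff_single_same, hIcc1]
  · intro s hs
    rw [prod_single, HahnSeries.coeff_single]
    simp only [ite_eq_right_iff]
    intro hEq
    exfalso
    apply hs
    have h1 : ((q - 1) * ∑ k ∈ Finset.Icc 1 i, q ^ k : ℕ) = (q - 1) * ∑ j ∈ s.1, q ^ j := by
      exact_mod_cast hEq
    have h2 : (∑ k ∈ Finset.Icc 1 i, q ^ k) = ∑ j ∈ s.1, q ^ j :=
      Nat.eq_of_mul_eq_mul_left (by have := one_lt_q Fq; omega) h1
    exact Subtype.ext ((key_lemma (one_lt_q Fq) i s.1 s.2.1 s.2.2).2 h2.symm)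

lemma geom_id (n : ℕ) :
    (q - 1) * (∑ k ∈ Finset.Icc 1 n, q ^ k) + q = q ^ (n + 1) := by
  have h1 : 1 ≤ q := (one_lt_q Fq).le
  induction n with
  | zero => simp
  | succ n ih =>
    rw [Finset.sum_Icc_succ_top (by omega), Nat.mul_add, pow_succ q (n+1)]
    set B := q ^ (n + 1) with hB
    have h3 : (q - 1) * B + B = B * q := by
      have hq : q - 1 + 1 = q := by omega
      calc (q - 1) * B + B = ((q - 1) + 1) * B := by ring
        _ = q * B := by rw [hq]
        _ = B * q := mul_comm _ _
    linarith

lemma tth_inv_pow_q : (tth Fq)⁻¹ ^ q = HahnSeries.single (q : ℤ) 1 := by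
  rw [tth_eq, HahnSeries.inv_single (-1 : ℤ) (1 : Fq), neg_neg, inv_one,
    HahnSeries.single_pow, one_pow, nsmul_eq_mul, mul_one]

lemma ecoeff_coeff (n : ℕ) (d : ℤ) :
    (ecoeff Fq n).coeff d = (-1 : Fq) ^ n * (esymm Fq n).coeff (d - q) := by
  have hneg : ((-1 : 𝕃)) ^ n = HahnSeries.single (0 : ℤ) ((-1 : Fq) ^ n) := by
    rw [show (-1 : 𝕃) = HahnSeries.single (0:ℤ) (-1 : Fq) by
        rw [← neg_single, HahnSeries.single_zero_one],
      HahnSeries.single_pow, smul_zero]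
  have h1 : (ecoeff Fq n) = HahnSeries.single ((q : ℤ)) ((-1 : Fq) ^ n) * esymm Fq n := by
    rw [ecoeff, tth_inv_pow_q, hneg, HahnSeries.single_mul_single, add_zero, one_mul]
  rw [h1]
  have h2 := HahnSeries.coeff_single_mul_add (r := (-1 : Fq) ^ n) (x := esymm Fq n)
    (a := d - (q : ℤ)) (b := (q : ℤ))
  rw [sub_add_cancel] at h2
  exact h2

lemma ecoeff_coeff_lt (n : ℕ) (d : ℤ) (hd : d < (q : ℤ) ^ (n + 1)) :
    (ecoeff Fq n).coeff d = 0 := by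
  rw [ecoeff_coeff]
  rw [esymm_coeff_lt Fq n _ ?_, mul_zero]
  have hg := geom_id Fq n
  have hcast : (((q - 1) * ∑ k ∈ Finset.Icc 1 n, q ^ k : ℕ) : ℤ) + q = (q : ℤ) ^ (n + 1) := by
    exact_mod_cast congrArg (Nat.cast : ℕ → ℤ) hg
  omega

lemma ecoeff_coeff_eq (n : ℕ) : (ecoeff Fq n).coeff ((q : ℤ) ^ (n + 1)) = 1 := by
  rw [ecoeff_coeff]
  have hg := geom_id Fq n
  have hcast : (((q - 1) * ∑ k ∈ Finset.Icc 1 n, q ^ k : ℕ) : ℤ) + q = (q : ℤ) ^ (n + 1) := by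
    exact_mod_cast congrArg (Nat.cast : ℕ → ℤ) hg
  rw [show (q : ℤ) ^ (n + 1) - q = (((q - 1) * ∑ k ∈ Finset.Icc 1 n, q ^ k : ℕ) : ℤ) by omega]
  rw [esymm_coeff_eq, ← mul_pow]
  norm_num

lemma etilde_summable (x : 𝕃) :
    Summable (fun n : ℕ => thetaCoeff Fq x (n + 1) • ecoeff Fq n) := by
  apply summable_of_coeff Fq _ (fun n => (q : ℤ) ^ (n + 1))
  · intro n d hd
    rw [HahnSeries.coeff_smul, ecoeff_coeff_lt Fq n d hd, smul_zero]
  · rw [Nat.cofinite_eq_atTop]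
    exact (tendsto_pow_atTop_atTop_of_one_lt
      (by exact_mod_cast one_lt_q Fq : (1:ℤ) < q)).comp (tendsto_add_atTop_nat 1)

theorem etilde_valuation
    (x : LaurentSeries Fq) (hx0 : x ≠ 0) (hx : memKinf Fq x)
    (hord : 0 < x.order) :
    ∀ m : ℕ, x.order = ((q : ℤ) - 1) * m →
      (etilde Fq x).order = (q : ℤ) ^ m := by
  intro m hm
  have hq1 : (1 : ℤ) < q := by exact_mod_cast one_lt_q Fq
  have hm1 : 1 ≤ m := by
    rcases Nat.eq_zero_or_pos m with h | h
    · exfalso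
      rw [h] at hm
      simp only [Nat.cast_zero, mul_zero] at hm
      omega
    · exact h
  have hsum : Summable (fun n : ℕ => thetaCoeff Fq x (n + 1) • ecoeff Fq n) :=
    etilde_summable Fq x
  have hcoeff_small : ∀ n : ℕ, n + 1 < m → thetaCoeff Fq x (n + 1) = 0 := by
    intro n hn
    rw [thetaCoeff, HahnSeries.coeff_eq_zero_of_lt_order, mul_zero]
    rw [hm]
    exact mul_lt_mul_of_pos_left (by exact_mod_cast hn) (by omega)
  have hvanish : ∀ d : ℤ, d < (q : ℤ) ^ m → (etilde Fq x).coeff d = 0 := by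
    intro d hd
    rw [etilde]
    apply coeff_tsum_eq_zero Fq _ hsum
    intro n
    rcases lt_or_ge (n + 1) m with h | h
    · rw [HahnSeries.coeff_smul, hcoeff_small n h, zero_smul]
    · rw [HahnSeries.coeff_smul, ecoeff_coeff_lt Fq n d
        (lt_of_lt_of_le hd (pow_le_pow_right₀ hq1.le h)), smul_zero]
  have hm' : m - 1 + 1 = m := Nat.sub_add_cancel hm1
  have hmain : (etilde Fq x).coeff ((q : ℤ) ^ m) = thetaCoeff Fq x m := by
    rw [etilde, coeff_tsum_eq_single Fq _ hsum _ (m - 1) ?_]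
    · rw [HahnSeries.coeff_smul, show ((q : ℤ) ^ m) = (q : ℤ) ^ (m - 1 + 1) by rw [hm'],
        ecoeff_coeff_eq, smul_eq_mul, mul_one, hm']
    · intro n hn
      rcases lt_or_ge (n + 1) m with h | h
      · rw [HahnSeries.coeff_smul, hcoeff_small n h, zero_smul]
      · have h2 : m < n + 1 := by omega
        rw [HahnSeries.coeff_smul, ecoeff_coeff_lt Fq n _
          (pow_lt_pow_right₀ hq1 h2), smul_zero]
  have hc : thetaCoeff Fq x m ≠ 0 := by
    rw [thetaCoeff, ← hm]
    exact mul_ne_zero (pow_ne_zero _ (neg_ne_zero.mpr one_ne_zero))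
      (mt HahnSeries.coeff_order_eq_zero.mp hx0)
  have hne : etilde Fq x ≠ 0 := fun h0 => hc (by rw [← hmain, h0, HahnSeries.coeff_zero])
  have hle : (etilde Fq x).order ≤ (q : ℤ) ^ m :=
    HahnSeries.order_le_of_coeff_ne_zero (by rw [hmain]; exact hc)
  rcases hle.lt_or_eq with hlt | heq
  · exact absurd (hvanish _ hlt) (mt HahnSeries.coeff_order_eq_zero.mp hne)
  · exact heq

end
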